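/- Let u : ℝᴺ → ℝᴺ be continuous, let K ≥ 0 and k ≥ 0, let T₁ ≤ T₂, and let φ : [T₁,T₂] → ℝᴺ be an admissible path with derivative g such that ‖u(φ(t))‖ ≤ K for all t ∈ [T₁,T₂] and (1/4)∫_{T₁}^{T₂} ‖g(t) − u(φ(t))‖² dt ≤ k. Then for all s₁, s₂ with T₁ ≤ s₁ ≤ s₂ ≤ T₂, ‖φ(s₂) − φ(s₁)‖ ≤ 2·√((s₂ − s₁)·k) + (s₂ − s₁)·K. (Uniform Hölder-type modulus of continuity for paths of bounded Freidlin–Wentzell action; this yields uniform equicontinuity of any family of paths with uniformly bounded actions and drifts.) -/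

import Mathlib

/-!
Write `φ(s₂) − φ(s₁) = ∫_{s₁}^{s₂} (g − u∘φ) + ∫_{s₁}^{s₂} u∘φ`. The drift term is at most
`(s₂ − s₁)K`. By Cauchy–Schwarz the first term is at most `√(s₂ − s₁)` times the `L²` norm of
`g − u∘φ` on `[s₁,s₂]`, and that norm is at most `√(4k)` by the action bound.
-/

open MeasureTheory Set

/-- A path `φ : [T₁,T₂] → ℝᴺ` is admissible with derivative `g` if `g` is measurable with
square-integrable norm on `[T₁,T₂]` and `φ(t) = φ(T₁) + ∫_{T₁}^t g(s) ds` on `[T₁,T₂]`. -/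
def IsAdmissiblePath (N : ℕ) (T₁ T₂ : ℝ)
    (φ g : ℝ → EuclideanSpace ℝ (Fin N)) : Prop :=
  Measurable g ∧
  MeasureTheory.IntegrableOn (fun t => ‖g t‖ ^ 2) (Set.Icc T₁ T₂) ∧
  ∀ t ∈ Set.Icc T₁ T₂, φ t = φ T₁ + ∫ s in T₁..t, g s

theorem integral_norm_le_sqrt_measureReal_mul_integral_sq {α E : Type*} [MeasurableSpace α]
    {μ : Measure α} [IsFiniteMeasure μ] [NormedAddCommGroup E] {f : α → E} (hf : MemLp f 2 μ) :
    ∫ a, ‖f a‖ ∂μ ≤ √(μ.real univ * ∫ a, ‖f a‖ ^ 2 ∂μ) := by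
  have holder := integral_mul_norm_le_Lp_mul_Lq (μ := μ) (f := fun a => ‖f a‖)
    (g := fun _ => (1 : ℝ)) .two_two (by simpa using hf.norm) (by simpa using memLp_const (1 : ℝ))
  simp only [norm_norm, norm_one, mul_one, one_pow, integral_const, smul_eq_mul,
    Real.rpow_two] at holder
  rwa [← Real.sqrt_eq_rpow, ← Real.sqrt_eq_rpow,
    ← Real.sqrt_mul (integral_nonneg fun _ => by positivity), mul_comm] at holder

section Interval

variable {E : Type*} [NormedAddCommGroup E] {f : ℝ → E} {a b s₁ s₂ : ℝ}

theorem ContinuousOn.memLp_restrict_Icc (hf : ContinuousOn f (Icc a b)) (p : ENNReal) :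
    MemLp f p (volume.restrict (Icc a b)) :=
  have ⟨C, hC⟩ := isCompact_Icc.exists_bound_of_continuousOn hf
  .of_bound (hf.aestronglyMeasurable measurableSet_Icc) C
    (ae_restrict_of_forall_mem measurableSet_Icc hC)

theorem MeasureTheory.MemLp.intervalIntegrable_of_uIcc_subset {p : ENNReal} (hp : 1 ≤ p)
    (hf : MemLp f p (volume.restrict (Icc a b))) (h : uIcc s₁ s₂ ⊆ Icc a b) :
    IntervalIntegrable f volume s₁ s₂ :=
  (IntegrableOn.mono_set (hf.integrable hp) h).intervalIntegrable

theorem norm_intervalIntegral_le_sqrt_mul_integral_sq [NormedSpace ℝ E]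
    (hf : MemLp f 2 (volume.restrict (Icc a b))) (hs : s₁ ≤ s₂) (hsub : Icc s₁ s₂ ⊆ Icc a b) :
    ‖∫ t in s₁..s₂, f t‖ ≤ √((s₂ - s₁) * ∫ t in Icc a b, ‖f t‖ ^ 2) :=
  calc ‖∫ t in s₁..s₂, f t‖ = ‖∫ t in Icc s₁ s₂, f t‖ := by
        rw [intervalIntegral.integral_of_le hs, integral_Icc_eq_integral_Ioc]
    _ ≤ ∫ t in Icc s₁ s₂, ‖f t‖ := norm_integral_le_integral_norm _
    _ ≤ √((s₂ - s₁) * ∫ t in Icc s₁ s₂, ‖f t‖ ^ 2) := by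
        simpa [Real.volume_real_Icc_of_le hs] using
          integral_norm_le_sqrt_measureReal_mul_integral_sq
            (hf.mono_measure (Measure.restrict_mono hsub le_rfl))
    _ ≤ √((s₂ - s₁) * ∫ t in Icc a b, ‖f t‖ ^ 2) :=
        Real.sqrt_le_sqrt <| mul_le_mul_of_nonneg_left (setIntegral_mono_set
          hf.integrable_norm_pow' (ae_of_all _ fun _ => by positivity) hsub.eventuallyLE)
          (sub_nonneg.2 hs)

end Interval

namespace IsAdmissiblePath

variable {N : ℕ} {T₁ T₂ : ℝ} {φ g : ℝ → EuclideanSpace ℝ (Fin N)}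

theorem memLp (hφ : IsAdmissiblePath N T₁ T₂ φ g) : MemLp g 2 (volume.restrict (Icc T₁ T₂)) :=
  (memLp_two_iff_integrable_sq_norm hφ.1.aestronglyMeasurable).2 hφ.2.1

theorem integrableOn (hφ : IsAdmissiblePath N T₁ T₂ φ g) : IntegrableOn g (Icc T₁ T₂) :=
  hφ.memLp.integrable one_le_two

theorem continuousOn (hφ : IsAdmissiblePath N T₁ T₂ φ g) : ContinuousOn φ (Icc T₁ T₂) := by
  refine ((continuousOn_const (c := φ T₁)).add
    (intervalIntegral.continuousOn_primitive hφ.integrableOn)).congr fun t ht => ?_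
  rw [hφ.2.2 t ht, intervalIntegral.integral_of_le ht.1]
  rfl

theorem sub_eq_intervalIntegral (hφ : IsAdmissiblePath N T₁ T₂ φ g) {s₁ s₂ : ℝ}
    (hs₁ : s₁ ∈ Icc T₁ T₂) (hs₂ : s₂ ∈ Icc T₁ T₂) : φ s₂ - φ s₁ = ∫ t in s₁..s₂, g t := by
  have hint : ∀ s ∈ Icc T₁ T₂, IntervalIntegrable g volume T₁ s := fun s hs =>
    hφ.memLp.intervalIntegrable_of_uIcc_subset one_le_two (uIcc_subset_Icc (left_mem_Icc.2
      (hs.1.trans hs.2)) hs)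
  rw [hφ.2.2 s₂ hs₂, hφ.2.2 s₁ hs₁, add_sub_add_left_eq_sub,
    intervalIntegral.integral_interval_sub_left (hint s₂ hs₂) (hint s₁ hs₁)]

end IsAdmissiblePath

theorem path_modulus_of_continuity_general (N : ℕ)
    (u : EuclideanSpace ℝ (Fin N) → EuclideanSpace ℝ (Fin N)) (hu : Continuous u)
    (K k : ℝ)
    (T₁ T₂ : ℝ)
    (φ g : ℝ → EuclideanSpace ℝ (Fin N))
    (hφ : IsAdmissiblePath N T₁ T₂ φ g)
    (hKbound : ∀ t ∈ Set.Icc T₁ T₂, ‖u (φ t)‖ ≤ K)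
    (hact : (1 / 4) * (∫ t in Set.Icc T₁ T₂, ‖g t - u (φ t)‖ ^ 2) ≤ k) :
    ∀ s₁ s₂ : ℝ, T₁ ≤ s₁ → s₁ ≤ s₂ → s₂ ≤ T₂ →
      ‖φ s₂ - φ s₁‖ ≤ 2 * Real.sqrt ((s₂ - s₁) * k) + (s₂ - s₁) * K := by
  intro s₁ s₂ hs₁ hs hs₂
  have hsub : Icc s₁ s₂ ⊆ Icc T₁ T₂ := Icc_subset_Icc hs₁ hs₂
  have hdrift : MemLp (fun t => u (φ t)) 2 (volume.restrict (Icc T₁ T₂)) :=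
    (hu.comp_continuousOn hφ.continuousOn).memLp_restrict_Icc 2
  have hdev : MemLp (fun t => g t - u (φ t)) 2 (volume.restrict (Icc T₁ T₂)) :=
    hφ.memLp.sub hdrift
  have hsplit : φ s₂ - φ s₁ = (∫ t in s₁..s₂, g t - u (φ t)) + ∫ t in s₁..s₂, u (φ t) := by
    rw [intervalIntegral.integral_sub
        (hφ.memLp.intervalIntegrable_of_uIcc_subset one_le_two (uIcc_of_le hs ▸ hsub))
        (hdrift.intervalIntegrable_of_uIcc_subset one_le_two (uIcc_of_le hs ▸ hsub)),
      sub_add_cancel, hφ.sub_eq_intervalIntegral ⟨hs₁, hs.trans hs₂⟩ ⟨hs₁.trans hs, hs₂⟩]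
  have hdev_le : ‖∫ t in s₁..s₂, g t - u (φ t)‖ ≤ 2 * √((s₂ - s₁) * k) :=
    calc _ ≤ √((s₂ - s₁) * ∫ t in Icc T₁ T₂, ‖g t - u (φ t)‖ ^ 2) :=
          norm_intervalIntegral_le_sqrt_mul_integral_sq hdev hs hsub
      _ ≤ √((s₂ - s₁) * (2 ^ 2 * k)) := by gcongr; linarith
      _ = 2 * √((s₂ - s₁) * k) := by
          rw [mul_left_comm, Real.sqrt_mul (by positivity), Real.sqrt_sq zero_le_two]
  have hdrift_le : ‖∫ t in s₁..s₂, u (φ t)‖ ≤ (s₂ - s₁) * K := by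
    have := intervalIntegral.norm_integral_le_of_norm_le_const fun t ht =>
      hKbound t (hsub (Ioc_subset_Icc_self (uIoc_of_le hs ▸ ht)))
    rwa [abs_of_nonneg (sub_nonneg.2 hs), mul_comm] at this
  rw [hsplit]
  exact (norm_add_le _ _).trans (add_le_add hdev_le hdrift_le)

/-- Uniform Hölder-type modulus of continuity for paths of bounded
Freidlin–Wentzell action: if `‖u(φ(t))‖ ≤ K` on `[T₁,T₂]` and the action is at most `k`,
then `‖φ(s₂) − φ(s₁)‖ ≤ 2√((s₂−s₁)k) + (s₂−s₁)K` for `T₁ ≤ s₁ ≤ s₂ ≤ T₂`. -/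
theorem path_modulus_of_continuity (N : ℕ) (hN : 1 ≤ N)
    (u : EuclideanSpace ℝ (Fin N) → EuclideanSpace ℝ (Fin N)) (hu : Continuous u)
    (K k : ℝ) (hK : 0 ≤ K) (hk : 0 ≤ k)
    (T₁ T₂ : ℝ) (hT : T₁ ≤ T₂)
    (φ g : ℝ → EuclideanSpace ℝ (Fin N))
    (hφ : IsAdmissiblePath N T₁ T₂ φ g)
    (hKbound : ∀ t ∈ Set.Icc T₁ T₂, ‖u (φ t)‖ ≤ K)
    (hact : (1 / 4) * (∫ t in Set.Icc T₁ T₂, ‖g t - u (φ t)‖ ^ 2) ≤ k) :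
    ∀ s₁ s₂ : ℝ, T₁ ≤ s₁ → s₁ ≤ s₂ → s₂ ≤ T₂ →
      ‖φ s₂ - φ s₁‖ ≤ 2 * Real.sqrt ((s₂ - s₁) * k) + (s₂ - s₁) * K :=
  path_modulus_of_continuity_general N u hu K k T₁ T₂ φ g hφ hKbound hact
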